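/- (Partial fraction decomposition for the connector) For any real 0 < q < 1, any positive integer n, and an indeterminate x, ∑_{m=1}^{n} ([m]_q/([m]_q − q^m x)) · (-1)^{m-1} q^{m(m-1)/2} / ([m]_q! [n−m]_q!) = 1 / ∏_{h=1}^{n} ([h]_q − q^h x), as an identity of rational functions in x. -/

import Mathlib

noncomputable def qint (q : ℝ) (m : ℕ) : ℝ := (1 - q ^ m) / (1 - q)

noncomputable def qfact (q : ℝ) (m : ℕ) : ℝ := ∏ a ∈ Finset.Icc 1 m, qint q a

/-- The connector `C(m,n,q,x)`. -/
noncomputable def connector (q : ℝ) (m n : ℕ) (x : ℝ) : ℝ :=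
  (-1 : ℝ) ^ (m - 1) * q ^ (m * (m + 1) / 2) *
    (∏ h ∈ Finset.Icc 1 n, (qint q h - q ^ h * x)) / (qfact q m * qfact q (n - m))

/-!
Partial fractions with simple poles: if the affine factors `a i - b i * x` have pairwise distinct
roots `r i = a i / b i`, then `∑ i, ∏_{j ≠ i} (x - r j) / (r i - r j) = 1` (the Lagrange basis sums
to one), and dividing by `∏ i, (a i - b i * x)` expands `1 / ∏ i, (a i - b i * x)` with residues
`1 / ∏_{j ≠ i} (a j - b j * r i)`.

Here the roots are `r m = [m]_q / q^m`, which increase strictly in `m`. By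
`[m + k]_q = [k]_q + q^k [m]_q`, the factor `h` takes the value `[h - m]_q` at `r m` when `h > m`
and `-[m - h]_q / q^(m - h)` when `h < m`, so the residue at `r m` is
`(-1)^(m-1) q^(m(m-1)/2) / ([m-1]_q! [n-m]_q!)`.
-/

open Finset

section PartialFraction

variable {ι K : Type*} [Field K] [DecidableEq ι] {s : Finset ι}

theorem Lagrange.inv_prod_sub_eq_sum_nodalWeight {v : ι → K} (hvs : Set.InjOn v s)
    (hs : s.Nonempty) {x : K} (hx : ∀ i ∈ s, x ≠ v i) :
    (∏ i ∈ s, (x - v i))⁻¹ = ∑ i ∈ s, Lagrange.nodalWeight s v i * (x - v i)⁻¹ := by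
  have h := Lagrange.eval_interpolate_not_at_node (1 : ι → K) hx
  simp only [Lagrange.interpolate_one hvs hs, Polynomial.eval_one, Lagrange.eval_nodal,
    Pi.one_apply, mul_one] at h
  exact inv_eq_of_mul_eq_one_right h.symm

theorem inv_prod_sub_mul_eq_sum {a b : ι → K} (hb : ∀ i ∈ s, b i ≠ 0)
    (hroots : Set.InjOn (fun i ↦ a i / b i) s) (hs : s.Nonempty) {x : K}
    (hx : ∀ i ∈ s, a i - b i * x ≠ 0) :
    (∏ i ∈ s, (a i - b i * x))⁻¹ =
      ∑ i ∈ s, (a i - b i * x)⁻¹ * (∏ j ∈ s.erase i, (a j - b j * (a i / b i)))⁻¹ := by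
  have factor : ∀ y, ∀ i ∈ s, a i - b i * y = -b i * (y - a i / b i) := by
    intro y i hi; field_simp [hb i hi]; ring
  have hx' : ∀ i ∈ s, x ≠ a i / b i := by
    intro i hi h; apply hx i hi; rw [factor x i hi, h, sub_self, mul_zero]
  rw [prod_congr rfl (factor x), prod_mul_distrib, mul_inv,
    Lagrange.inv_prod_sub_eq_sum_nodalWeight hroots hs hx', mul_sum]
  refine sum_congr rfl fun i hi ↦ ?_
  rw [factor x i hi, prod_congr rfl fun j hj ↦ factor _ j (mem_of_mem_erase hj),
    prod_mul_distrib, ← mul_prod_erase s (fun j ↦ -b j) hi, Lagrange.nodalWeight]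
  simp only [mul_inv, prod_inv_distrib]
  ring

end PartialFraction

section QAnalogues

variable {q : ℝ}

theorem qint_one (hq : q ≠ 1) : qint q 1 = 1 := by
  rw [qint, pow_one, div_self (sub_ne_zero.mpr hq.symm)]

theorem qint_add (hq : q ≠ 1) (m k : ℕ) : qint q (m + k) = qint q k + q ^ k * qint q m := by
  have : 1 - q ≠ 0 := sub_ne_zero.mpr hq.symm
  simp only [qint]
  field_simp
  ring

theorem qint_eq_geom_sum (hq : q ≠ 1) (m : ℕ) : qint q m = ∑ i ∈ range m, q ^ i := by
  rw [geom_sum_eq hq, qint, ← neg_div_neg_eq, neg_sub, neg_sub]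

theorem qint_pos (hq0 : 0 < q) (hq1 : q ≠ 1) {m : ℕ} (hm : m ≠ 0) : 0 < qint q m := by
  rw [qint_eq_geom_sum hq1]
  exact sum_pos (fun i _ ↦ pow_pos hq0 i) (nonempty_range_iff.mpr hm)

theorem qfact_pos (hq0 : 0 < q) (hq1 : q ≠ 1) (m : ℕ) : 0 < qfact q m :=
  prod_pos fun a ha ↦ qint_pos hq0 hq1 (by have := (mem_Icc.mp ha).1; omega)

theorem qfact_succ (m : ℕ) : qfact q (m + 1) = qfact q m * qint q (m + 1) :=
  prod_Icc_succ_top (Nat.le_add_left 1 m) _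

theorem qint_add_sub_pow_mul_root (hq0 : q ≠ 0) (hq1 : q ≠ 1) (m k : ℕ) :
    qint q (m + k) - q ^ (m + k) * (qint q m / q ^ m) = qint q k := by
  rw [qint_add hq1, pow_add]
  field_simp
  ring

theorem qint_sub_pow_mul_root_add (hq0 : q ≠ 0) (hq1 : q ≠ 1) (h k : ℕ) :
    qint q h - q ^ h * (qint q (h + k) / q ^ (h + k)) = -(qint q k / q ^ k) := by
  rw [qint_add hq1, pow_add]
  field_simp
  ring

theorem strictMono_qint_div_pow (hq0 : 0 < q) (hq1 : q ≠ 1) :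
    StrictMono fun m ↦ qint q m / q ^ m := by
  refine strictMono_nat_of_lt_succ fun m ↦ ?_
  have hsucc : qint q (m + 1) / q ^ (m + 1) = qint q m / q ^ m + 1 / q ^ (m + 1) := by
    rw [qint_add hq1, qint_one hq1, pow_succ]
    field_simp
    ring
  rw [hsucc, lt_add_iff_pos_right]
  positivity

theorem prod_Ico_qint_sub_pow_mul_root (hq0 : q ≠ 0) (hq1 : q ≠ 1) (m : ℕ) :
    ∏ h ∈ Ico 1 m, (qint q h - q ^ h * (qint q m / q ^ m)) =
      (-1) ^ (m - 1) * qfact q (m - 1) / q ^ (m * (m - 1) / 2) := by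
  have reflect : ∀ h ∈ Ico 1 m, qint q h - q ^ h * (qint q m / q ^ m) =
      -(qint q (m - h) / q ^ (m - h)) := fun h hh ↦ by
    have := qint_sub_pow_mul_root_add hq0 hq1 h (m - h)
    rwa [Nat.add_sub_cancel' (mem_Ico.mp hh).2.le] at this
  have hIco : Ico 1 m = Icc 1 (m - 1) := by ext; simp; omega
  rw [prod_congr rfl reflect, prod_Ico_reflect (fun k ↦ -(qint q k / q ^ k)) 1 (Nat.le_succ m)]
  simp only [Nat.add_sub_cancel_left, Nat.add_sub_cancel]
  have hsum : ∑ i ∈ Ico 1 m, i = ∑ i ∈ range m, i := by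
    rw [range_eq_Ico]
    exact sum_subset (Ico_subset_Ico_left zero_le_one) fun i hi hi' ↦ by
      simp only [mem_Ico] at hi hi'; omega
  rw [prod_neg, prod_div_distrib, prod_pow_eq_pow_sum, Nat.card_Ico, hsum, sum_range_id, hIco,
    mul_div_assoc, qfact]

theorem prod_Ioc_qint_sub_pow_mul_root (hq0 : q ≠ 0) (hq1 : q ≠ 1) {m n : ℕ} (hmn : m ≤ n) :
    ∏ h ∈ Ioc m n, (qint q h - q ^ h * (qint q m / q ^ m)) = qfact q (n - m) := by
  obtain ⟨k, rfl⟩ := Nat.exists_eq_add_of_le hmn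
  rw [← Icc_add_one_left_eq_Ioc, ← map_add_left_Icc, prod_map, Nat.add_sub_cancel_left]
  exact prod_congr rfl fun j _ ↦ qint_add_sub_pow_mul_root hq0 hq1 m j

theorem prod_erase_qint_sub_pow_mul_root (hq0 : q ≠ 0) (hq1 : q ≠ 1) {m n : ℕ} (hmn : m ≤ n) :
    ∏ h ∈ (Icc 1 n).erase m, (qint q h - q ^ h * (qint q m / q ^ m)) =
      (-1) ^ (m - 1) * qfact q (m - 1) * qfact q (n - m) / q ^ (m * (m - 1) / 2) := by
  have hsplit : (Icc 1 n).erase m = Ico 1 m ∪ Ioc m n := by ext; simp; omega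
  have hdisj : Disjoint (Ico 1 m) (Ioc m n) :=
    disjoint_left.mpr fun i h₁ h₂ ↦ by simp only [mem_Ico, mem_Ioc] at h₁ h₂; omega
  rw [hsplit, prod_union hdisj, prod_Ico_qint_sub_pow_mul_root hq0 hq1,
    prod_Ioc_qint_sub_pow_mul_root hq0 hq1 hmn]
  ring

end QAnalogues

theorem connector_partial_fraction (q : ℝ) (hq0 : 0 < q) (hq1 : q < 1) (n : ℕ) (hn : 0 < n)
    (x : ℝ) (hx : ∀ h ∈ Finset.Icc 1 n, qint q h - q ^ h * x ≠ 0) :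
    ∑ m ∈ Finset.Icc 1 n,
        qint q m / (qint q m - q ^ m * x) *
          ((-1 : ℝ) ^ (m - 1) * q ^ (m * (m - 1) / 2) / (qfact q m * qfact q (n - m))) =
      1 / ∏ h ∈ Finset.Icc 1 n, (qint q h - q ^ h * x) := by
  rw [one_div, inv_prod_sub_mul_eq_sum (fun h _ ↦ pow_ne_zero h hq0.ne')
    (strictMono_qint_div_pow hq0 hq1.ne).injective.injOn (nonempty_Icc.mpr hn) hx]
  refine sum_congr rfl fun m hm ↦ ?_
  obtain ⟨hm1, hmn⟩ := mem_Icc.mp hm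
  obtain ⟨k, rfl⟩ : ∃ k, m = k + 1 := ⟨m - 1, by omega⟩
  rw [prod_erase_qint_sub_pow_mul_root hq0.ne' hq1.ne hmn, qfact_succ, Nat.add_sub_cancel]
  have hqint := (qint_pos hq0 hq1.ne k.succ_ne_zero).ne'
  have hqfact := (qfact_pos hq0 hq1.ne k).ne'
  have hqfact' := (qfact_pos hq0 hq1.ne (n - (k + 1))).ne'
  field_simp
  rw [← pow_mul, pow_mul', neg_one_sq, one_pow]
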